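/- Let γ = (γ_1, γ_2): I → R² be a smooth curve with (γ_1')² + (γ_2')² > 0, and consider the immersed hypersurface F(u_1,u_2,u_3) = (γ_1(u_1), γ_2(u_1), u_2, u_3) in Sol^4_0. Then F is totally geodesic if and only if the Euclidean curvature γ_1''γ_2' - γ_1'γ_2'' of γ vanishes identically; in general, the second fundamental form satisfies h(W,W) = e^{u_3} κ_γ N and h = 0 on all other pairs from the orthonormal tangent frame {W, E_3, E_4}, where W = (γ_1'E_1 + γ_2'E_2)/√((γ_1')²+(γ_2')²), N = (γ_2'E_1 - γ_1'E_2)/√((γ_1')²+(γ_2')²), and κ_γ = (γ_1''γ_2' - γ_1'γ_2'')/((γ_1')²+(γ_2')²)^{3/2}. -/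
import Mathlib


noncomputable section

abbrev Pt := Fin 4 → ℝ
abbrev Vec := Fin 4 → ℝ
abbrev VF := Pt → Vec

/-- Diagonal coefficients of the metric g = e^{-2t}(dx²+dy²)+e^{4t}dz²+dt². -/
def Gc (i : Fin 4) (p : Pt) : ℝ :=
  if i = 0 ∨ i = 1 then Real.exp (-2 * p 3)
  else if i = 2 then Real.exp (4 * p 3) else 1

/-- The Riemannian metric of Sol⁴₀ at a point, as a bilinear form on tangent vectors. -/
def gSol (p : Pt) (v w : Vec) : ℝ := ∑ i, Gc i p * v i * w i

def cvec (i : Fin 4) : Vec := fun j => if j = i then 1 else 0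

/-- Partial derivative in the i-th coordinate direction. -/
def pd (i : Fin 4) (f : Pt → ℝ) (p : Pt) : ℝ := fderiv ℝ f p (cvec i)

/-- Christoffel symbols of the (diagonal) metric gSol. -/
def Chr (k i j : Fin 4) (p : Pt) : ℝ :=
  (1 / (2 * Gc k p)) *
    ((if j = k then pd i (Gc k) p else 0) +
     (if i = k then pd j (Gc k) p else 0) -
     (if i = j then pd k (Gc i) p else 0))

/-- Levi-Civita covariant derivative ∇̃_X Y of the metric gSol. -/
def nabla (X Y : VF) : VF := fun p k =>
  fderiv ℝ (fun q => Y q k) p (X p) + ∑ i, ∑ j, Chr k i j p * X p i * Y p j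

/-- Lie bracket of vector fields. -/
def bracket (X Y : VF) : VF := fun p k =>
  fderiv ℝ (fun q => Y q k) p (X p) - fderiv ℝ (fun q => X q k) p (Y p)

/-- Riemann curvature tensor R(X,Y)Z = ∇_X∇_Y Z − ∇_Y∇_X Z − ∇_{[X,Y]}Z. -/
def Riem (X Y Z : VF) : VF := fun p =>
  nabla X (nabla Y Z) p - nabla Y (nabla X Z) p - nabla (bracket X Y) Z p

/-- The orthonormal frame E₁ = eᵗ∂ₓ, E₂ = eᵗ∂_y, E₃ = e^{-2t}∂_z, E₄ = ∂_t. -/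
def EE (i : Fin 4) : VF := fun p j =>
  if i = 0 then (if j = 0 then Real.exp (p 3) else 0)
  else if i = 1 then (if j = 1 then Real.exp (p 3) else 0)
  else if i = 2 then (if j = 2 then Real.exp (-2 * p 3) else 0)
  else (if j = 3 then 1 else 0)

/-- The immersion F(u₁,u₂,u₃) = (γ₁(u₁), γ₂(u₁), u₂, u₃) into Sol⁴₀. -/
def F18 (γ1 γ2 : ℝ → ℝ) (u : Fin 3 → ℝ) : Pt := fun i =>
  if i = 0 then γ1 (u 0) else if i = 1 then γ2 (u 0) else if i = 2 then u 1 else u 2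

/-- Coordinate tangent vectors ∂F/∂u_i of the immersion. -/
def dF18 (γ1 γ2 : ℝ → ℝ) (i : Fin 3) (u : Fin 3 → ℝ) : Vec :=
  if i = 0 then
    (fun k => if k = 0 then deriv γ1 (u 0) else if k = 1 then deriv γ2 (u 0) else 0)
  else if i = 1 then cvec 2 else cvec 3

/-- Second coordinate derivatives ∂²F/∂u_i∂u_j of the immersion. -/
def ddF18 (γ1 γ2 : ℝ → ℝ) (i j : Fin 3) (u : Fin 3 → ℝ) : Vec :=
  if i = 0 ∧ j = 0 then
    (fun k => if k = 0 then deriv (deriv γ1) (u 0)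
              else if k = 1 then deriv (deriv γ2) (u 0) else 0)
  else 0

/-- Ambient covariant derivative ∇̃_{∂u_i}∂u_j F along the immersion. -/
def covF18 (γ1 γ2 : ℝ → ℝ) (i j : Fin 3) (u : Fin 3 → ℝ) : Vec := fun k =>
  ddF18 γ1 γ2 i j u k +
    ∑ a, ∑ b, Chr k a b (F18 γ1 γ2 u) * dF18 γ1 γ2 i u a * dF18 γ1 γ2 j u b

/-- The unit normal N = (γ₂′E₁ − γ₁′E₂)/√((γ₁′)²+(γ₂′)²) along the immersion. -/
def N18 (γ1 γ2 : ℝ → ℝ) (u : Fin 3 → ℝ) : Vec := fun k =>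
  if k = 0 then Real.exp (u 2) * deriv γ2 (u 0) / Real.sqrt ((deriv γ1 (u 0)) ^ 2 + (deriv γ2 (u 0)) ^ 2)
  else if k = 1 then -(Real.exp (u 2) * deriv γ1 (u 0)) / Real.sqrt ((deriv γ1 (u 0)) ^ 2 + (deriv γ2 (u 0)) ^ 2)
  else 0

/-- Scalar second fundamental form h(∂u_i, ∂u_j) = g(∇̃_{∂u_i}∂u_j F, N). -/
def h18 (γ1 γ2 : ℝ → ℝ) (i j : Fin 3) (u : Fin 3 → ℝ) : ℝ :=
  gSol (F18 γ1 γ2 u) (covF18 γ1 γ2 i j u) (N18 γ1 γ2 u)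


lemma fderiv_exp_lin (c : ℝ) (p : Pt) :
    fderiv ℝ (fun q : Pt => Real.exp (c * q 3)) p
      = (c * Real.exp (c * p 3)) • (ContinuousLinearMap.proj 3 : Pt →L[ℝ] ℝ) := by
  have h1 : HasFDerivAt (fun q : Pt => c * q 3)
      (c • (ContinuousLinearMap.proj 3 : Pt →L[ℝ] ℝ)) p :=
    ((ContinuousLinearMap.proj 3 : Pt →L[ℝ] ℝ).hasFDerivAt).const_mul c
  have h2 := (Real.hasDerivAt_exp (c * p 3)).comp_hasFDerivAt p h1
  have h3 : HasFDerivAt (fun q : Pt => Real.exp (c * q 3))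
      ((c * Real.exp (c * p 3)) • (ContinuousLinearMap.proj 3 : Pt →L[ℝ] ℝ)) p := by
    rw [smul_smul, mul_comm] at h2; exact h2
  exact h3.fderiv

lemma pd_exp_lin (c : ℝ) (i : Fin 4) (p : Pt) :
    pd i (fun q : Pt => Real.exp (c * q 3)) p
      = if i = 3 then c * Real.exp (c * p 3) else 0 := by
  rw [pd, fderiv_exp_lin]
  simp [cvec, eq_comm]

lemma pd_Gc (i k : Fin 4) (p : Pt) :
    pd i (Gc k) p = if i = 3 then
      (if k = 0 ∨ k = 1 then -2 * Real.exp (-2 * p 3)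
       else if k = 2 then 4 * Real.exp (4 * p 3) else 0) else 0 := by
  by_cases hk : k = 0 ∨ k = 1
  · have hG : Gc k = fun q : Pt => Real.exp (-2 * q 3) := by
      funext q; simp [Gc, hk]
    rw [hG, pd_exp_lin]; simp [hk]
  · by_cases hk2 : k = 2
    · have hG : Gc k = fun q : Pt => Real.exp (4 * q 3) := by
        funext q; simp [Gc, hk, hk2]
      rw [hG, pd_exp_lin]; simp [hk, hk2]
    · have hG : Gc k = fun _ : Pt => (1 : ℝ) := by
        funext q; simp [Gc, hk, hk2]
      rw [hG, pd]
      simp [hk, hk2]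

/-- For the hypersurface F(u₁,u₂,u₃) = (γ₁(u₁),γ₂(u₁),u₂,u₃): in the orthonormal tangent
frame {W, E₃, E₄}, with W = (γ₁′E₁+γ₂′E₂)/√((γ₁′)²+(γ₂′)²), the second fundamental form is
h(W,W) = e^{u₃}κ_γ (as coefficient of N) and vanishes on all other frame pairs; consequently
F is totally geodesic iff the Euclidean curvature γ₁″γ₂′ − γ₁′γ₂″ of γ vanishes identically. -/
theorem sol40_codazzi_hypersurface (γ1 γ2 : ℝ → ℝ)
    (h1 : ContDiff ℝ (⊤ : ℕ∞) γ1) (h2 : ContDiff ℝ (⊤ : ℕ∞) γ2)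
    (hreg : ∀ s : ℝ, 0 < (deriv γ1 s) ^ 2 + (deriv γ2 s) ^ 2) :
    (∀ u : Fin 3 → ℝ,
      (Real.exp (2 * u 2) / ((deriv γ1 (u 0)) ^ 2 + (deriv γ2 (u 0)) ^ 2)) * h18 γ1 γ2 0 0 u
        = Real.exp (u 2) *
            ((deriv (deriv γ1) (u 0) * deriv γ2 (u 0) -
              deriv γ1 (u 0) * deriv (deriv γ2) (u 0)) /
              ((deriv γ1 (u 0)) ^ 2 + (deriv γ2 (u 0)) ^ 2) ^ ((3 : ℝ) / 2))) ∧
    (∀ (u : Fin 3 → ℝ) (i j : Fin 3), ¬(i = 0 ∧ j = 0) → h18 γ1 γ2 i j u = 0) ∧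
    ((∀ (i j : Fin 3) (u : Fin 3 → ℝ), h18 γ1 γ2 i j u = 0) ↔
      ∀ s : ℝ, deriv (deriv γ1) s * deriv γ2 s - deriv γ1 s * deriv (deriv γ2) s = 0)  := by
  have key1 : ∀ u : Fin 3 → ℝ,
      (Real.exp (2 * u 2) / ((deriv γ1 (u 0)) ^ 2 + (deriv γ2 (u 0)) ^ 2)) * h18 γ1 γ2 0 0 u
        = Real.exp (u 2) *
            ((deriv (deriv γ1) (u 0) * deriv γ2 (u 0) -
              deriv γ1 (u 0) * deriv (deriv γ2) (u 0)) /
              ((deriv γ1 (u 0)) ^ 2 + (deriv γ2 (u 0)) ^ 2) ^ ((3 : ℝ) / 2)) := by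
    intro u
    have hρ := hreg (u 0)
    simp only [h18, gSol, covF18, ddF18, dF18, N18, F18, Chr, pd_Gc, Gc, Fin.sum_univ_four]
    simp +decide
    set a := deriv γ1 (u 0)
    set b := deriv γ2 (u 0)
    have hs : 0 < Real.sqrt (a^2+b^2) := Real.sqrt_pos.2 hρ
    have h32 : (a^2+b^2) ^ ((3:ℝ)/2) = (a^2+b^2) * Real.sqrt (a^2+b^2) := by
      rw [show (3:ℝ)/2 = 1 + 1/2 by norm_num, Real.rpow_add hρ, Real.rpow_one,
        ← Real.sqrt_eq_rpow]
    rw [h32, Real.exp_neg (2 * u 2)]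
    have hsq : Real.sqrt (a^2+b^2) * Real.sqrt (a^2+b^2) = a^2+b^2 := Real.mul_self_sqrt hρ.le
    field_simp
    ring_nf
  have key2 : ∀ (u : Fin 3 → ℝ) (i j : Fin 3), ¬(i = 0 ∧ j = 0) → h18 γ1 γ2 i j u = 0 := by
    intro u i j hij
    fin_cases i <;> fin_cases j <;> simp_all <;>
      simp only [h18, gSol, covF18, ddF18, dF18, N18, F18, Chr, pd_Gc, Gc, cvec,
        Fin.sum_univ_four] <;>
      simp +decide [cvec] <;> ring
  refine ⟨key1, key2, ?_, ?_⟩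
  · intro hall s
    set u : Fin 3 → ℝ := fun i => if i = 0 then s else 0 with hu
    have hu0 : u 0 = s := by simp [hu]
    have hu2 : u 2 = 0 := by simp +decide [hu]
    have h0 := key1 u
    rw [hall 0 0 u, hu0, hu2, mul_zero] at h0
    have hρ := hreg s
    have hpow : (0:ℝ) < ((deriv γ1 s) ^ 2 + (deriv γ2 s) ^ 2) ^ ((3 : ℝ) / 2) :=
      Real.rpow_pos_of_pos hρ _
    have := h0.symm
    rw [mul_eq_zero] at this
    rcases this with h | h
    · exact absurd h (Real.exp_ne_zero 0)
    · rcases div_eq_zero_iff.mp h with h | h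
      · exact h
      · exact absurd h hpow.ne'
  · intro hz i j u
    by_cases hij : i = 0 ∧ j = 0
    · obtain ⟨hi, hj⟩ := hij
      subst hi hj
      have h0 := key1 u
      rw [hz (u 0), zero_div, mul_zero, mul_comm, mul_eq_zero] at h0
      rcases h0 with h | h
      · exact h
      · exact absurd h (div_pos (Real.exp_pos _) (hreg (u 0))).ne'
    · exact key2 u i j hij
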